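/- Let b > 1 and n > 1 be integers and a a positive integer with gcd(r_b(n), a) = 1. The genus of S_a(b,n), i.e., the cardinality of ℕ \ S_a(b,n), equals ((n−1)·b^n + a·(r_b(n) − 1)) / 2 = ((n−1)·b^n + a·∑_{j=1}^{n-1} b^j) / 2. -/

import Mathlib

/-- The repunit number in base `b` of length `ℓ`: `r_b(ℓ) = ∑_{j=0}^{ℓ-1} b^j`. -/
def repunit (b ℓ : ℕ) : ℕ := ∑ j ∈ Finset.range ℓ, b ^ j

/-- The sequence `a_i = r_b(n) + a·r_b(i-1)`. -/
def aseq (b a n i : ℕ) : ℕ := repunit b n + a * repunit b (i - 1)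

/-- The additive submonoid `S_a(b,n)` of `ℕ` generated by `{a_i : i ≥ 1}`. -/
def grep (b a n : ℕ) : AddSubmonoid ℕ :=
  AddSubmonoid.closure {x | ∃ i, 1 ≤ i ∧ x = aseq b a n i}


namespace StmtAux

lemma repunit_zero (b : ℕ) : repunit b 0 = 0 := by simp [repunit]

lemma repunit_one (b : ℕ) : repunit b 1 = 1 := by simp [repunit]

lemma repunit_succ (b l : ℕ) : repunit b (l + 1) = b * repunit b l + 1 := by
  rw [repunit, Finset.sum_range_succ', repunit, Finset.mul_sum]
  simp only [pow_zero]
  congr 1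
  exact Finset.sum_congr rfl fun i _ => by rw [pow_succ, mul_comm]

lemma repunit_succ' (b l : ℕ) : repunit b (l + 1) = repunit b l + b ^ l :=
  Finset.sum_range_succ _ _

lemma repunit_pos {b l : ℕ} (hl : 1 ≤ l) : 0 < repunit b l := by
  obtain ⟨l', rfl⟩ := Nat.exists_eq_add_of_le hl
  rw [add_comm, repunit_succ]
  omega

/-- `b^l = (b-1) * repunit b l + 1` stated subtraction-free with `b = c+1`. -/
lemma pow_eq_repunit (c l : ℕ) : (c + 1) ^ l = c * repunit (c + 1) l + 1 := by
  induction l with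
  | zero => simp [repunit_zero]
  | succ l ih => rw [pow_succ, ih, repunit_succ]; ring

lemma repunit_add (b n s : ℕ) : repunit b (n + s) = repunit b n + b ^ n * repunit b s := by
  induction s with
  | zero => simp [repunit_zero]
  | succ s ih =>
    rw [← add_assoc, repunit_succ', ih, repunit_succ', pow_add]
    ring

/-- `Rep b L k v`: `v` is a sum of `k` repunits in base `b` with lengths in `[1, L]`. -/
def Rep (b L k v : ℕ) : Prop :=
  ∃ M : Multiset ℕ, (∀ j ∈ M, 1 ≤ j ∧ j ≤ L) ∧ Multiset.card M = k ∧
    (M.map (repunit b)).sum = v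

/-- minimal number of repunits of lengths in `[1,L]` summing to `v`. -/
noncomputable def mincount (b L v : ℕ) : ℕ := sInf {k | Rep b L k v}

lemma rep_zero (b L : ℕ) : Rep b L 0 0 := ⟨0, by simp⟩

lemma rep_add {b L k₁ v₁ k₂ v₂ : ℕ} (h₁ : Rep b L k₁ v₁) (h₂ : Rep b L k₂ v₂) :
    Rep b L (k₁ + k₂) (v₁ + v₂) := by
  obtain ⟨M₁, hc₁, hk₁, hv₁⟩ := h₁
  obtain ⟨M₂, hc₂, hk₂, hv₂⟩ := h₂
  refine ⟨M₁ + M₂, ?_, by simp [hk₁, hk₂], by simp [hv₁, hv₂]⟩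
  intro j hj
  rcases Multiset.mem_add.mp hj with h | h
  exacts [hc₁ j h, hc₂ j h]

lemma rep_replicate (b : ℕ) {L j : ℕ} (h1 : 1 ≤ j) (h2 : j ≤ L) (c : ℕ) :
    Rep b L c (c * repunit b j) := by
  refine ⟨Multiset.replicate c j, ?_, Multiset.card_replicate _ _, ?_⟩
  · intro x hx; rw [Multiset.eq_of_mem_replicate hx]; exact ⟨h1, h2⟩
  · rw [Multiset.map_replicate, Multiset.sum_replicate, smul_eq_mul]

lemma rep_self {b L : ℕ} (hL : 1 ≤ L) (v : ℕ) : Rep b L v v := by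
  have := rep_replicate b le_rfl hL v
  rwa [repunit_one, mul_one] at this

lemma rep_mono {b L L' k v : ℕ} (h : L ≤ L') (hr : Rep b L k v) : Rep b L' k v := by
  obtain ⟨M, hc, hk, hv⟩ := hr
  exact ⟨M, fun j hj => ⟨(hc j hj).1, le_trans (hc j hj).2 h⟩, hk, hv⟩

lemma mincount_le {b L k v : ℕ} (h : Rep b L k v) : mincount b L v ≤ k := Nat.sInf_le h

lemma rep_mincount {b L : ℕ} (hL : 1 ≤ L) (v : ℕ) : Rep b L (mincount b L v) v := by
  have h : {k | Rep b L k v}.Nonempty := ⟨v, rep_self hL v⟩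
  exact Nat.sInf_mem h

lemma mincount_zero (b L : ℕ) : mincount b L 0 = 0 :=
  Nat.le_zero.mp (mincount_le (rep_zero b L))

lemma mincount_add {b L : ℕ} (hL : 1 ≤ L) (v w : ℕ) :
    mincount b L (v + w) ≤ mincount b L v + mincount b L w :=
  mincount_le (rep_add (rep_mincount hL v) (rep_mincount hL w))

lemma mincount_one (b t : ℕ) : mincount b 1 t = t := by
  have h1 : Rep b 1 t t := rep_self le_rfl t
  have h2 : ∀ k, Rep b 1 k t → t ≤ k := by
    rintro k ⟨M, hc, hk, hv⟩
    have hM : M = Multiset.replicate k 1 := by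
      rw [← hk]
      exact Multiset.eq_replicate_card.mpr fun j hj => le_antisymm (hc j hj).2 (hc j hj).1
    rw [hM, Multiset.map_replicate, Multiset.sum_replicate, repunit_one, smul_eq_mul,
      mul_one] at hv
    omega
  exact le_antisymm (mincount_le h1) (h2 _ (rep_mincount le_rfl t))

/-- Lemma C: removing 1 from a representable value costs at most `b - 1` extra parts. -/
lemma rep_pred {b L k v : ℕ} (hb : 2 ≤ b) (h : Rep b L k (v + 1)) :
    ∃ k', k' + 1 ≤ k + b ∧ Rep b L k' v := by
  obtain ⟨M, hc, hk, hv⟩ := h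
  have hM : M ≠ 0 := by rintro rfl; simp at hv
  obtain ⟨j, hj⟩ := Multiset.exists_mem_of_ne_zero hM
  obtain ⟨M', rfl⟩ := Multiset.exists_cons_of_mem hj
  have hj1 := (hc j (Multiset.mem_cons_self _ _)).1
  have hjL := (hc j (Multiset.mem_cons_self _ _)).2
  rw [Multiset.map_cons, Multiset.sum_cons] at hv
  rw [Multiset.card_cons] at hk
  have hcoins : ∀ x ∈ M', 1 ≤ x ∧ x ≤ L := fun x hx =>
    hc x (Multiset.mem_cons_of_mem hx)
  obtain ⟨j', rfl⟩ : ∃ j', j = j' + 1 := ⟨j - 1, by omega⟩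
  by_cases hj0 : j' = 0
  · subst hj0
    rw [repunit_one] at hv
    exact ⟨Multiset.card M', by omega, M', hcoins, rfl, by omega⟩
  · refine ⟨b + Multiset.card M', by omega,
      Multiset.replicate b j' + M', ?_, by simp, ?_⟩
    · intro x hx
      rcases Multiset.mem_add.mp hx with hx | hx
      · rw [Multiset.eq_of_mem_replicate hx]; omega
      · exact hcoins x hx
    · rw [Multiset.map_add, Multiset.sum_add, Multiset.map_replicate, Multiset.sum_replicate,
        smul_eq_mul]
      rw [repunit_succ] at hv
      omega

/-- Iterated version of the removal lemma. -/
lemma rep_sub_iter {b L : ℕ}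
    (hB : ∀ k u, Rep b L k (u + repunit b (L + 1)) → ∃ k', k' + 1 ≤ k ∧ Rep b L k' u) :
    ∀ d k u, Rep b L k (u + d * repunit b (L + 1)) → ∃ k', k' + d ≤ k ∧ Rep b L k' u := by
  intro d
  induction d with
  | zero => intro k u h; exact ⟨k, by omega, by simpa using h⟩
  | succ d ih =>
    intro k u h
    have h1 : Rep b L k ((u + d * repunit b (L + 1)) + repunit b (L + 1)) := by
      have he : (u + d * repunit b (L + 1)) + repunit b (L + 1)
          = u + (d + 1) * repunit b (L + 1) := by ring
      rwa [he]
    obtain ⟨k₁, hk₁, hr₁⟩ := hB _ _ h1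
    obtain ⟨k₂, hk₂, hr₂⟩ := ih k₁ u hr₁
    exact ⟨k₂, by omega, hr₂⟩

/-- Lemma B: removing `repunit b (L+1)` from a value represented with parts of
lengths `≤ L` strictly decreases the number of parts. -/
lemma rep_sub {b : ℕ} (hb : 2 ≤ b) :
    ∀ L k u, Rep b L k (u + repunit b (L + 1)) → ∃ k', k' + 1 ≤ k ∧ Rep b L k' u := by
  intro L
  induction L with
  | zero =>
    intro k u h
    obtain ⟨M, hc, hk, hv⟩ := h
    have hM : M ≠ 0 := by
      rintro rfl
      rw [repunit_one] at hv
      simp at hv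
    obtain ⟨j, hj⟩ := Multiset.exists_mem_of_ne_zero hM
    have := hc j hj
    omega
  | succ L ih =>
    intro k u h
    obtain ⟨M, hc, hk, hv⟩ := h
    by_cases hcb : b ≤ M.count (L + 1)
    · have hle : Multiset.replicate b (L + 1) ≤ M := Multiset.le_count_iff_replicate_le.mp hcb
      obtain ⟨M₁, hM1⟩ := Multiset.le_iff_exists_add.mp hle
      rw [hM1] at hv hk hc
      have hsum : b * repunit b (L + 1) + (M₁.map (repunit b)).sum
          = u + repunit b (L + 2) := by
        rw [← hv, Multiset.map_add, Multiset.sum_add, Multiset.map_replicate,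
          Multiset.sum_replicate, smul_eq_mul]
      rw [repunit_succ b (L + 1)] at hsum
      have hrep1 : Rep b (L + 1) (Multiset.card M₁) (u + 1) := by
        refine ⟨M₁, fun x hx => hc x (Multiset.mem_add.mpr (Or.inr hx)), rfl, by omega⟩
      obtain ⟨k', hk', hr⟩ := rep_pred hb hrep1
      have hcard : b + Multiset.card M₁ = k := by
        rw [← hk]; simp
      exact ⟨k', by omega, hr⟩
    · push_neg at hcb
      set c := M.count (L + 1) with hcdef
      have hsplit : Multiset.replicate c (L + 1) + M.filter (fun x => ¬ x = (L + 1)) = M := by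
        rw [← Multiset.filter_eq' M (L + 1)]
        exact Multiset.filter_add_not _ M
      set M₀ := M.filter (fun x => ¬ x = (L + 1)) with hM0def
      have hcoins : ∀ x ∈ M₀, 1 ≤ x ∧ x ≤ L := by
        intro x hx
        rw [hM0def, Multiset.mem_filter] at hx
        have h1 := hc x hx.1
        have h2 := hx.2
        omega
      have hcard : c + Multiset.card M₀ = k := by rw [← hk, ← hsplit]; simp
      have hsum : c * repunit b (L + 1) + (M₀.map (repunit b)).sum
          = u + repunit b (L + 2) := by
        rw [← hv]
        conv_rhs => rw [← hsplit]
        rw [Multiset.map_add, Multiset.sum_add, Multiset.map_replicate,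
          Multiset.sum_replicate, smul_eq_mul]
      obtain ⟨e, he⟩ : ∃ e, b = c + e := ⟨b - c, by omega⟩
      have hbx : b * repunit b (L + 1) = c * repunit b (L + 1) + e * repunit b (L + 1) := by
        rw [← add_mul, ← he]
      rw [repunit_succ b (L + 1), hbx] at hsum
      have hsum2 : (M₀.map (repunit b)).sum = (u + 1) + e * repunit b (L + 1) := by
        have h2 : c * repunit b (L + 1) + (M₀.map (repunit b)).sum
            = c * repunit b (L + 1) + ((u + 1) + e * repunit b (L + 1)) := by
          rw [hsum]; ring
        exact Nat.add_left_cancel h2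
      have hrepM0 : Rep b L (Multiset.card M₀) ((u + 1) + e * repunit b (L + 1)) :=
        ⟨M₀, hcoins, rfl, hsum2⟩
      obtain ⟨k₁, hk₁, hr₁⟩ := rep_sub_iter ih e _ _ hrepM0
      obtain ⟨k₂, hk₂, hr₂⟩ := rep_pred hb (rep_mono (Nat.le_succ L) hr₁)
      exact ⟨k₂, by omega, hr₂⟩

/-- Greedy formula for `mincount`. -/
lemma mincount_greedy {b : ℕ} (hb : 2 ≤ b) {L : ℕ} (hL : 1 ≤ L) (t : ℕ) :
    mincount b (L + 1) t = t / repunit b (L + 1) + mincount b L (t % repunit b (L + 1)) := by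
  set r := repunit b (L + 1) with hrdef
  have hrpos : 0 < r := repunit_pos (by omega)
  set q := t / r with hq
  set ρ := t % r with hρ
  have hρlt : ρ < r := Nat.mod_lt _ hrpos
  have ht : q * r + ρ = t := by rw [hq, hρ, mul_comm]; exact Nat.div_add_mod t r
  apply le_antisymm
  · have h1 : Rep b (L + 1) q (q * r) := rep_replicate b (by omega) le_rfl q
    have h2 : Rep b (L + 1) (mincount b L ρ) ρ :=
      rep_mono (Nat.le_succ L) (rep_mincount hL ρ)
    have h3 := rep_add h1 h2
    rw [ht] at h3
    exact mincount_le h3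
  · obtain ⟨M, hc, hk, hv⟩ := rep_mincount (b := b) (L := L + 1) (by omega) t
    set c := M.count (L + 1) with hcdef
    have hsplit : Multiset.replicate c (L + 1) + M.filter (fun x => ¬ x = (L + 1)) = M := by
      rw [← Multiset.filter_eq' M (L + 1)]
      exact Multiset.filter_add_not _ M
    set M₀ := M.filter (fun x => ¬ x = (L + 1)) with hM0def
    have hcoins : ∀ x ∈ M₀, 1 ≤ x ∧ x ≤ L := by
      intro x hx
      rw [hM0def, Multiset.mem_filter] at hx
      have h1 := hc x hx.1
      have h2 := hx.2
      omega
    have hcard : c + Multiset.card M₀ = mincount b (L + 1) t := by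
      rw [← hk, ← hsplit]; simp
    have hsum : c * r + (M₀.map (repunit b)).sum = t := by
      rw [← hv]
      conv_rhs => rw [← hsplit]
      rw [Multiset.map_add, Multiset.sum_add, Multiset.map_replicate,
        Multiset.sum_replicate, smul_eq_mul]
    have hcq : c ≤ q := by
      rw [hq]
      exact Nat.le_div_iff_mul_le hrpos |>.mpr (by omega)
    obtain ⟨d, hd⟩ : ∃ d, q = c + d := ⟨q - c, by omega⟩
    have hsum2 : (M₀.map (repunit b)).sum = ρ + d * r := by
      have h2 : c * r + (M₀.map (repunit b)).sum = c * r + (ρ + d * r) := by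
        rw [hsum, ← ht, hd]; ring
      exact Nat.add_left_cancel h2
    have hrepM0 : Rep b L (Multiset.card M₀) (ρ + d * r) := ⟨M₀, hcoins, rfl, hsum2⟩
    obtain ⟨k₁, hk₁, hr₁⟩ := rep_sub_iter (rep_sub hb L) d _ _ hrepM0
    have hmc := mincount_le hr₁
    omega

lemma sum_range_mul (g : ℕ → ℕ) (c d : ℕ) :
    ∑ t ∈ Finset.range (c * d), g t
      = ∑ i ∈ Finset.range c, ∑ j ∈ Finset.range d, g (i * d + j) := by
  induction c with
  | zero => simp
  | succ c ih =>
    rw [Finset.sum_range_succ, ← ih, add_mul, one_mul, Finset.sum_range_add]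

/-- The key sum: `2 * ∑_{t < r_b(L+1)} mincount b L t = L b^{L+1} + b r_b(L)`. -/
lemma sum_mincount {b : ℕ} (hb : 2 ≤ b) :
    ∀ L, 1 ≤ L →
      2 * ∑ t ∈ Finset.range (repunit b (L + 1)), mincount b L t
        = L * b ^ (L + 1) + b * repunit b L := by
  intro L
  induction L with
  | zero => omega
  | succ L ih =>
    intro _
    by_cases hL0 : L = 0
    · subst hL0
      have h2 : repunit b 2 = b + 1 := by rw [repunit_succ, repunit_one, mul_one]
      simp only [zero_add, mincount_one, h2, repunit_one]
      rw [mul_comm 2, Finset.sum_range_id_mul_two]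
      have : (b + 1) - 1 = b := by omega
      rw [this, pow_two]
      ring
    · have hL1 : 1 ≤ L := by omega
      have ihL := ih hL1
      set r := repunit b (L + 1) with hrdef
      have hrpos : 0 < r := repunit_pos (by omega)
      have hsucc : repunit b (L + 1 + 1) = b * r + 1 := repunit_succ b (L + 1)
      rw [hsucc, Finset.sum_range_succ]
      have hgr : ∀ t, mincount b (L + 1) t = t / r + mincount b L (t % r) :=
        fun t => mincount_greedy hb hL1 t
      have hlast : mincount b (L + 1) (b * r) = b := by
        rw [hgr, Nat.mul_div_cancel _ hrpos, Nat.mul_mod_left, mincount_zero]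
        omega
      have h1 : ∑ t ∈ Finset.range (b * r), mincount b (L + 1) t
          = ∑ i ∈ Finset.range b, ∑ j ∈ Finset.range r, (i + mincount b L j) := by
        rw [sum_range_mul (fun t => mincount b (L + 1) t) b r]
        refine Finset.sum_congr rfl fun i _ => Finset.sum_congr rfl fun j hj => ?_
        have hj' : j < r := Finset.mem_range.mp hj
        rw [hgr, show i * r + j = j + i * r by ring, Nat.add_mul_div_right _ _ hrpos,
          Nat.add_mul_mod_self_right, Nat.div_eq_of_lt hj', Nat.mod_eq_of_lt hj']
        omega
      rw [h1, hlast]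
      have h2 : ∀ i, ∑ j ∈ Finset.range r, (i + mincount b L j)
          = r * i + ∑ j ∈ Finset.range r, mincount b L j := by
        intro i
        rw [Finset.sum_add_distrib, Finset.sum_const, Finset.card_range, smul_eq_mul]
      simp only [h2]
      rw [Finset.sum_add_distrib, Finset.sum_const, Finset.card_range, smul_eq_mul,
        ← Finset.mul_sum]
      set A := ∑ j ∈ Finset.range r, mincount b L j with hA
      set T := ∑ i ∈ Finset.range b, i with hT
      have hgauss : 2 * T = b * (b - 1) := by
        rw [hT, mul_comm 2]; exact Finset.sum_range_id_mul_two b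
      -- final arithmetic
      obtain ⟨c, hc⟩ : ∃ c, b = c + 1 := ⟨b - 1, by omega⟩
      have hb1 : b - 1 = c := by omega
      have hx : r = b * repunit b L + 1 := repunit_succ b L
      have hp : b ^ (L + 1) = c * r + 1 := by
        rw [hrdef, hc]; exact pow_eq_repunit c (L + 1)
      have hP : b ^ (L + 1 + 1) = b * b ^ (L + 1) := by rw [pow_succ, mul_comm]
      rw [hb1] at hgauss
      -- goal : 2 * (r * T + b * A + b) = (L+1) * b^(L+2) + b * r
      have expand : 2 * (r * T + b * A + b) = r * (2 * T) + b * (2 * A) + 2 * b := by ring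
      rw [expand, hgauss, ihL, hP, hp, hx, hc]
      ring

lemma m_mem {b a n : ℕ} : repunit b n ∈ grep b a n := by
  apply AddSubmonoid.subset_closure
  exact ⟨1, le_rfl, by simp [aseq, repunit_zero]⟩

lemma mem_of_multiset {b a n : ℕ} (hn : 2 ≤ n) :
    ∀ M : Multiset ℕ, (∀ j ∈ M, 1 ≤ j ∧ j ≤ n - 1) →
      Multiset.card M * repunit b n + a * (M.map (repunit b)).sum ∈ grep b a n := by
  intro M
  induction M using Multiset.induction with
  | empty => intro _; simpa using zero_mem (grep b a n)
  | cons j M ih =>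
    intro hc
    have h1 : repunit b n + a * repunit b j ∈ grep b a n := by
      apply AddSubmonoid.subset_closure
      exact ⟨j + 1, by omega, by simp [aseq]⟩
    have h2 := ih fun x hx => hc x (Multiset.mem_cons_of_mem hx)
    have heq : Multiset.card (j ::ₘ M) * repunit b n + a * ((j ::ₘ M).map (repunit b)).sum
        = (repunit b n + a * repunit b j)
          + (Multiset.card M * repunit b n + a * (M.map (repunit b)).sum) := by
      rw [Multiset.card_cons, Multiset.map_cons, Multiset.sum_cons]
      ring
    rw [heq]
    exact add_mem h1 h2

lemma gen_decomp {b a n : ℕ} (hb : 2 ≤ b) (hn : 2 ≤ n) :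
    ∀ l, ∃ k t, mincount b (n - 1) t ≤ 1 ∧ 1 ≤ k ∧
      repunit b n + a * repunit b l = k * repunit b n + a * t := by
  intro l
  induction l using Nat.strong_induction_on with
  | _ l ih =>
    by_cases hl : l < n
    · rcases Nat.eq_zero_or_pos l with rfl | hl0
      · exact ⟨1, 0, by rw [mincount_zero]; omega, le_rfl, by simp [repunit_zero]⟩
      · refine ⟨1, repunit b l, ?_, le_rfl, by ring⟩
        have : Rep b (n - 1) 1 (repunit b l) := by
          have := rep_replicate b (j := l) (L := n - 1) hl0 (by omega) 1
          rwa [one_mul] at this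
        exact mincount_le this
    · push_neg at hl
      obtain ⟨s, rfl⟩ : ∃ s, l = n + s := ⟨l - n, by omega⟩
      obtain ⟨k, t, h1, h2, h3⟩ := ih s (by omega)
      obtain ⟨c, hc⟩ : ∃ c, b = c + 1 := ⟨b - 1, by omega⟩
      have hpow : b ^ n = c * repunit b n + 1 := by rw [hc]; exact pow_eq_repunit c n
      refine ⟨a * (1 + c * repunit b s) + k, t, h1, by omega, ?_⟩
      calc repunit b n + a * repunit b (n + s)
          = repunit b n + a * (repunit b n + (c * repunit b n + 1) * repunit b s) := by
            rw [repunit_add, hpow]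
        _ = a * (1 + c * repunit b s) * repunit b n
            + (repunit b n + a * repunit b s) := by ring
        _ = a * (1 + c * repunit b s) * repunit b n + (k * repunit b n + a * t) := by rw [h3]
        _ = (a * (1 + c * repunit b s) + k) * repunit b n + a * t := by ring

/-- Membership characterization for `grep`. -/
lemma mem_grep_iff {b a n : ℕ} (hb : 2 ≤ b) (hn : 2 ≤ n) (x : ℕ) :
    x ∈ grep b a n ↔ ∃ k t, mincount b (n - 1) t ≤ k ∧ x = k * repunit b n + a * t := by
  have hL : 1 ≤ n - 1 := by omega
  constructor
  · intro hx
    induction hx using AddSubmonoid.closure_induction with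
    | mem y hy =>
      obtain ⟨i, hi, rfl⟩ := hy
      obtain ⟨k, t, h1, h2, h3⟩ := gen_decomp hb hn (a := a) (i - 1)
      exact ⟨k, t, le_trans h1 h2, h3⟩
    | zero => exact ⟨0, 0, by rw [mincount_zero], by simp⟩

    | add x y hx hy ihx ihy =>
      obtain ⟨k₁, t₁, hk₁, rfl⟩ := ihx
      obtain ⟨k₂, t₂, hk₂, rfl⟩ := ihy
      refine ⟨k₁ + k₂, t₁ + t₂, ?_, by ring⟩
      calc mincount b (n - 1) (t₁ + t₂) ≤ mincount b (n - 1) t₁ + mincount b (n - 1) t₂ :=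
            mincount_add hL t₁ t₂
        _ ≤ k₁ + k₂ := by omega
  · rintro ⟨k, t, hkt, rfl⟩
    obtain ⟨e, he⟩ : ∃ e, k = mincount b (n - 1) t + e := ⟨k - mincount b (n - 1) t, by omega⟩
    obtain ⟨M, hc, hcard, hsum⟩ := rep_mincount (b := b) hL t
    have heq : k * repunit b n + a * t
        = (Multiset.card M * repunit b n + a * (M.map (repunit b)).sum)
          + e * repunit b n := by
      rw [hcard, hsum, he]; ring
    rw [heq]
    refine add_mem (mem_of_multiset hn M hc) ?_
    have := AddSubmonoid.nsmul_mem (grep b a n) (m_mem (a := a)) e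
    rwa [smul_eq_mul] at this

/-- Apéry-type minimality input. -/
lemma mincount_shift {b n : ℕ} (hb : 2 ≤ b) (hn : 2 ≤ n) (t j : ℕ) :
    mincount b (n - 1) t + j ≤ mincount b (n - 1) (t + j * repunit b n) := by
  have hL : 1 ≤ n - 1 := by omega
  have hn1 : n - 1 + 1 = n := by omega
  have hB := rep_sub hb (n - 1)
  rw [hn1] at hB
  have hrep := rep_mincount (b := b) hL (t + j * repunit b n)
  have hrep' : Rep b (n - 1) (mincount b (n - 1) (t + j * repunit b n))
      (t + j * repunit b (n - 1 + 1)) := by rwa [hn1]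
  obtain ⟨k', hk', hr⟩ := rep_sub_iter (by rwa [hn1]) j _ _ hrep'
  have := mincount_le hr
  omega

/-- Number of gaps in the residue class of `a*t mod m`. -/
noncomputable def Dfun (b a n t : ℕ) : ℕ := mincount b (n - 1) t + a * t / repunit b n

/-- The finite set of gaps of `grep b a n`. -/
noncomputable def gapF (b a n : ℕ) : Finset ℕ :=
  (Finset.range (repunit b n)).biUnion
    (fun t => (Finset.range (Dfun b a n t)).image
      (fun i => i * repunit b n + a * t % repunit b n))

lemma mulmod_inj {b a n : ℕ} (hn : 2 ≤ n) (hgcd : Nat.gcd (repunit b n) a = 1)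
    {t₁ t₂ : ℕ} (h₁ : t₁ < repunit b n) (h₂ : t₂ < repunit b n)
    (h : a * t₁ % repunit b n = a * t₂ % repunit b n) : t₁ = t₂ := by
  have hmod : t₁ ≡ t₂ [MOD repunit b n] :=
    Nat.ModEq.cancel_left_of_coprime hgcd h
  calc t₁ = t₁ % repunit b n := (Nat.mod_eq_of_lt h₁).symm
    _ = t₂ % repunit b n := hmod
    _ = t₂ := Nat.mod_eq_of_lt h₂

lemma image_mulmod {b a n : ℕ} (hn : 2 ≤ n) (hgcd : Nat.gcd (repunit b n) a = 1) :
    (Finset.range (repunit b n)).image (fun t => a * t % repunit b n)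
      = Finset.range (repunit b n) := by
  have hm : 0 < repunit b n := repunit_pos (by omega)
  apply Finset.eq_of_subset_of_card_le
  · intro x hx
    simp only [Finset.mem_image, Finset.mem_range] at hx ⊢
    obtain ⟨t, _, rfl⟩ := hx
    exact Nat.mod_lt _ hm
  · rw [Finset.card_image_of_injOn, Finset.card_range]
    intro t₁ h₁ t₂ h₂ he
    exact mulmod_inj hn hgcd (Finset.mem_range.mp h₁) (Finset.mem_range.mp h₂) he

lemma card_gapF {b a n : ℕ} (hn : 2 ≤ n) (hgcd : Nat.gcd (repunit b n) a = 1) :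
    (gapF b a n).card = ∑ t ∈ Finset.range (repunit b n), Dfun b a n t := by
  have hm : 0 < repunit b n := repunit_pos (by omega)
  rw [gapF, Finset.card_biUnion]
  · refine Finset.sum_congr rfl fun t _ => ?_
    rw [Finset.card_image_of_injective, Finset.card_range]
    intro i₁ i₂ h
    simp only at h
    have h2 : i₁ * repunit b n = i₂ * repunit b n := Nat.add_right_cancel h
    exact Nat.eq_of_mul_eq_mul_right hm h2
  · intro t₁ h₁ t₂ h₂ hne
    simp only [Finset.disjoint_left, Finset.mem_image, Finset.mem_range]
    rintro x ⟨i₁, _, rfl⟩ ⟨i₂, _, hx⟩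
    apply hne
    have hr₁ : a * t₁ % repunit b n < repunit b n := Nat.mod_lt _ hm
    have hr₂ : a * t₂ % repunit b n < repunit b n := Nat.mod_lt _ hm
    have hmodeq : a * t₁ % repunit b n = a * t₂ % repunit b n := by
      have h1 : (i₂ * repunit b n + a * t₂ % repunit b n) % repunit b n
          = a * t₂ % repunit b n := by
        rw [add_comm, Nat.add_mul_mod_self_right, Nat.mod_eq_of_lt hr₂]
      have h2 : (i₁ * repunit b n + a * t₁ % repunit b n) % repunit b n
          = a * t₁ % repunit b n := by
        rw [add_comm, Nat.add_mul_mod_self_right, Nat.mod_eq_of_lt hr₁]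
      rw [← h2, ← hx]
      exact h1
    exact mulmod_inj hn hgcd (Finset.mem_range.mp h₁) (Finset.mem_range.mp h₂) hmodeq

lemma gap_set_eq {b a n : ℕ} (hb : 2 ≤ b) (hn : 2 ≤ n) (ha : 1 ≤ a)
    (hgcd : Nat.gcd (repunit b n) a = 1) :
    {x : ℕ | x ∉ grep b a n} = ↑(gapF b a n) := by
  have hm : 0 < repunit b n := repunit_pos (by omega)
  set m := repunit b n with hmdef
  ext x
  simp only [Set.mem_setOf_eq, Finset.mem_coe]
  constructor
  · intro hx
    have hxm : x % m ∈ Finset.range m := Finset.mem_range.mpr (Nat.mod_lt _ hm)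
    rw [← image_mulmod hn hgcd] at hxm
    obtain ⟨t, ht, hmod⟩ := Finset.mem_image.mp hxm
    have htlt : t < m := Finset.mem_range.mp ht
    by_cases hD : Dfun b a n t ≤ x / m
    · exfalso
      apply hx
      rw [mem_grep_iff hb hn]
      obtain ⟨e, he⟩ : ∃ e, x / m = Dfun b a n t + e := ⟨_, (Nat.add_sub_cancel' hD).symm⟩
      refine ⟨mincount b (n - 1) t + e, t, by omega, ?_⟩
      calc x = (x / m) * m + x % m := by rw [mul_comm]; exact (Nat.div_add_mod x m).symm
        _ = (mincount b (n - 1) t + (a * t / m) + e) * m + a * t % m := by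
            rw [he, ← hmod]; rfl
        _ = (mincount b (n - 1) t + e) * m + ((a * t / m) * m + a * t % m) := by ring
        _ = (mincount b (n - 1) t + e) * m + a * t := by
            rw [mul_comm (a * t / m) m, Nat.div_add_mod]
    · push_neg at hD
      rw [gapF, Finset.mem_biUnion]
      refine ⟨t, ht, Finset.mem_image.mpr ⟨x / m, Finset.mem_range.mpr hD, ?_⟩⟩
      rw [hmod, mul_comm]
      exact Nat.div_add_mod x m
  · intro hxG hxmem
    rw [gapF, Finset.mem_biUnion] at hxG
    obtain ⟨t, ht, hxim⟩ := hxG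
    obtain ⟨i, hi, hxeq⟩ := Finset.mem_image.mp hxim
    have htlt : t < m := Finset.mem_range.mp ht
    have hiD : i < Dfun b a n t := Finset.mem_range.mp hi
    rw [mem_grep_iff hb hn] at hxmem
    obtain ⟨k, t', hk, hkeq⟩ := hxmem
    have hrlt : a * t % m < m := Nat.mod_lt _ hm
    have hmod2 : a * t % m = a * t' % m := by
      have e1 : x % m = a * t % m := by
        rw [← hxeq, add_comm, Nat.add_mul_mod_self_right, Nat.mod_eq_of_lt hrlt]
      have e2 : x % m = a * t' % m := by
        rw [hkeq, add_comm, Nat.add_mul_mod_self_right]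
      rw [← e1, e2]
    have hmodeq : t % m = t' % m := Nat.ModEq.cancel_left_of_coprime hgcd hmod2
    have ht'm : t' % m = t := by rw [← hmodeq, Nat.mod_eq_of_lt htlt]
    set j := t' / m with hj
    have ht' : t' = t + j * m := by
      conv_lhs => rw [← Nat.div_add_mod t' m]
      rw [ht'm, ← hj]
      ring
    have hsh := mincount_shift hb hn t j
    rw [hmdef] at ht'
    rw [← ht'] at hsh
    have hk2 : mincount b (n - 1) t + j ≤ k := le_trans hsh hk
    have hieq : i = k + a * j + a * t / m := by
      have h3 : i * m + a * t % m = k * m + a * (t + j * m) := by rw [hxeq, hkeq, ht']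
      have h4 : a * (t + j * m) = (a * j) * m + (a * t / m) * m + a * t % m := by
        calc a * (t + j * m) = a * t + (a * j) * m := by ring
          _ = ((a * t / m) * m + a * t % m) + (a * j) * m := by
              rw [mul_comm (a * t / m) m, Nat.div_add_mod]
          _ = (a * j) * m + (a * t / m) * m + a * t % m := by ring
      rw [h4] at h3
      have h5 : i * m + a * t % m = (k + a * j + a * t / m) * m + a * t % m := by
        rw [h3]; ring
      exact Nat.eq_of_mul_eq_mul_right hm (Nat.add_right_cancel h5)
    have hik : k + a * t / m ≤ i := by
      rw [hieq]
      calc k + a * t / m ≤ (k + a * j) + a * t / m :=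
            Nat.add_le_add_right (Nat.le_add_right k (a * j)) _
        _ = k + a * j + a * t / m := rfl
    rw [Dfun, ← hmdef] at hiD
    clear_value j
    generalize hgen : a * t / m = qq at hiD hik
    omega

end StmtAux


open StmtAux in
/-- The genus of `S_a(b,n)` (the cardinality of `ℕ \ S_a(b,n)`) equals
`((n−1)·b^n + a·(r_b(n) − 1)) / 2 = ((n−1)·b^n + a·∑_{j=1}^{n-1} b^j) / 2`
(the numerators are even, so the natural-number divisions are exact). -/
theorem stmt_15 (b a n : ℕ) (hb : 1 < b) (hn : 1 < n) (ha : 0 < a)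
    (hgcd : Nat.gcd (repunit b n) a = 1) :
    Nat.card {x : ℕ | x ∉ grep b a n}
        = ((n - 1) * b ^ n + a * (repunit b n - 1)) / 2 ∧
    ((n - 1) * b ^ n + a * (repunit b n - 1)) / 2
        = ((n - 1) * b ^ n + a * ∑ j ∈ Finset.Icc 1 (n - 1), b ^ j) / 2 := by
  have hb' : 2 ≤ b := hb
  have hn' : 2 ≤ n := hn
  have ha' : 1 ≤ a := ha
  have hm : 0 < repunit b n := repunit_pos (by omega)
  set m := repunit b n with hmdef
  have hcard : Nat.card {x : ℕ | x ∉ grep b a n} = ∑ t ∈ Finset.range m, Dfun b a n t := by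
    rw [Nat.card_coe_set_eq, gap_set_eq hb' hn' ha' hgcd, Set.ncard_coe_finset,
      card_gapF hn' hgcd]
  have hn1 : n - 1 + 1 = n := by omega
  have hA := sum_mincount hb' (n - 1) (by omega)
  rw [hn1, ← hmdef] at hA
  -- Q-part
  have hQ : 2 * ∑ t ∈ Finset.range m, (a * t / m) = (a - 1) * (m - 1) := by
    set T := ∑ t ∈ Finset.range m, t with hT
    set Q := ∑ t ∈ Finset.range m, (a * t / m) with hQdef
    have h1 : ∑ t ∈ Finset.range m, a * t = a * T := by rw [hT, Finset.mul_sum]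
    have hR : ∑ t ∈ Finset.range m, (a * t % m) = T := by
      have hinj : ∀ x ∈ Finset.range m, ∀ y ∈ Finset.range m,
          a * x % m = a * y % m → x = y := fun x hx y hy h =>
        mulmod_inj hn' hgcd (Finset.mem_range.mp hx) (Finset.mem_range.mp hy) h
      have himg : ∑ x ∈ (Finset.range m).image (fun t => a * t % m), x
          = ∑ x ∈ Finset.range m, (a * x % m) := Finset.sum_image hinj
      rw [image_mulmod hn' hgcd] at himg
      rw [← himg, hT]
    have h2 : ∑ t ∈ Finset.range m, a * t = m * Q + T := by
      rw [← hR, hQdef, Finset.mul_sum, ← Finset.sum_add_distrib]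
      exact Finset.sum_congr rfl fun t _ => (Nat.div_add_mod (a * t) m).symm
    rw [h1] at h2
    obtain ⟨a', haa⟩ : ∃ a', a = a' + 1 := ⟨a - 1, by omega⟩
    have h3 : a' * T = m * Q := by
      have h := h2
      rw [haa, add_mul, one_mul] at h
      exact Nat.add_right_cancel h
    have hgauss : 2 * T = m * (m - 1) := by
      rw [hT, mul_comm 2]; exact Finset.sum_range_id_mul_two m
    have h4 : m * (2 * Q) = m * (a' * (m - 1)) := by
      calc m * (2 * Q) = 2 * (m * Q) := by ring
        _ = 2 * (a' * T) := by rw [h3]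
        _ = a' * (2 * T) := by ring
        _ = a' * (m * (m - 1)) := by rw [hgauss]
        _ = m * (a' * (m - 1)) := by ring
    have h5 : 2 * Q = a' * (m - 1) := Nat.eq_of_mul_eq_mul_left hm h4
    have ha1 : a - 1 = a' := by omega
    rw [ha1]
    exact h5
  have hsplitD : ∑ t ∈ Finset.range m, Dfun b a n t
      = (∑ t ∈ Finset.range m, mincount b (n - 1) t)
        + ∑ t ∈ Finset.range m, (a * t / m) := by
    rw [← Finset.sum_add_distrib]
    exact Finset.sum_congr rfl fun t _ => rfl
  have hx : m = b * repunit b (n - 1) + 1 := by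
    rw [hmdef, ← hn1]; exact repunit_succ b (n - 1)
  have hbx : b * repunit b (n - 1) = m - 1 := by rw [hx, Nat.add_sub_cancel]
  have hnum : 2 * ∑ t ∈ Finset.range m, Dfun b a n t
      = (n - 1) * b ^ n + a * (m - 1) := by
    rw [hsplitD, Nat.mul_add, hA, hQ, hbx]
    obtain ⟨a', haa⟩ : ∃ a', a = a' + 1 := ⟨a - 1, by omega⟩
    have ha1 : a - 1 = a' := by omega
    rw [ha1, haa]
    generalize m - 1 = M1
    ring
  have hIcc : m - 1 = ∑ j ∈ Finset.Icc 1 (n - 1), b ^ j := by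
    have hins : Finset.range n = insert 0 (Finset.Icc 1 (n - 1)) := by
      ext z
      simp only [Finset.mem_range, Finset.mem_insert, Finset.mem_Icc]
      omega
    have h0 : (0 : ℕ) ∉ Finset.Icc 1 (n - 1) := by simp
    rw [hmdef, repunit, hins, Finset.sum_insert h0, pow_zero]
    omega
  constructor
  · rw [hcard, ← hnum]
    omega
  · rw [hIcc]
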